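/- For every real number ν and each j ∈ {1, 2, 3}: j!·Σ_{ℓ=0}^{2} a_ℓ(ν)·C(ℓ+j, j)·Σ_{k=0}^{j} [ (−j)_k·(−νj)_k / ((−ℓ−j)_k·k!) ]·(−1)^k·(ν−1)^{j−k} = Q_{1,j}(ν), where a_0(ν) = ν(2+ν)/12, a_1(ν) = −ν(2+3ν)/12, a_2(ν) = ν²/6, and Q_{1,1}(ν) = ν(ν−1)(ν−2)/12, Q_{1,2}(ν) = (1/3)(3ν²−6ν+2)·ν(ν−1), Q_{1,3}(ν) = (3/4)(17ν³−39ν²+24ν−4)·ν(ν−1). -/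

import Mathlib

/-- The Pochhammer symbol `(y)_k = y(y+1)⋯(y+k−1)` on `ℝ`. -/
noncomputable def realPoch (y : ℝ) (k : ℕ) : ℝ := (ascPochhammer ℝ k).eval y

/-- The genus-1 coefficients `a_ℓ(ν)`. -/
noncomputable def genus1a : ℕ → ℝ → ℝ
  | 0, ν => ν * (2 + ν) / 12
  | 1, ν => -ν * (2 + 3 * ν) / 12
  | 2, ν => ν ^ 2 / 6
  | _, _ => 0

/-- The genus-1 two-legged count polynomials `Q_{1,j}(ν)`. -/
noncomputable def genus1Q : ℕ → ℝ → ℝ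
  | 1, ν => ν * (ν - 1) * (ν - 2) / 12
  | 2, ν => 1 / 3 * (3 * ν ^ 2 - 6 * ν + 2) * (ν * (ν - 1))
  | 3, ν => 3 / 4 * (17 * ν ^ 3 - 39 * ν ^ 2 + 24 * ν - 4) * (ν * (ν - 1))
  | _, _ => 0

/-!
Since `(−n)_k = (−1)^k n(n−1)⋯(n−k+1)`, the prefactor `j!·C(ℓ+j, j)` clears the denominators of
the terminating series: the `ℓ`-th summand becomes
`a_ℓ(ν) · Σ_k C(j,k) · (ℓ+j−k)!/ℓ! · (νj)(νj−1)⋯(νj−k+1) · (ν−1)^(j−k)`,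
and for `j ≤ 3` the identity is an equality of explicit polynomials in `ν`.
-/

open Nat Finset Polynomial

lemma realPoch_neg (x : ℝ) (k : ℕ) : realPoch (-x) k = (-1) ^ k * (descPochhammer ℝ k).eval x :=
  ascPochhammer_eval_neg_eq_descPochhammer _ x k

lemma realPoch_neg_natCast (n k : ℕ) : realPoch (-(n : ℝ)) k = (-1) ^ k * n.descFactorial k := by
  rw [realPoch_neg, descPochhammer_eval_eq_descFactorial]

theorem Nat.factorial_mul_add_choose_mul_descFactorial {ℓ j k : ℕ} (hk : k ≤ j) :
    j ! * (ℓ + j).choose j * j.descFactorial k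
      = j.choose k * (ℓ + 1).ascFactorial (j - k) * (ℓ + j).descFactorial k * k ! := by
  refine Nat.eq_of_mul_eq_mul_left (factorial_pos ℓ) ?_
  have hfac : ℓ ! * (ℓ + 1).ascFactorial (j - k) * (ℓ + j).descFactorial k = (ℓ + j)! := by
    rw [factorial_mul_ascFactorial, ← Nat.add_sub_assoc hk,
      factorial_mul_descFactorial (by omega)]
  calc ℓ ! * (j ! * (ℓ + j).choose j * j.descFactorial k)
      = (ℓ + j).choose j * ℓ ! * j ! * (k ! * j.choose k) := by
        rw [descFactorial_eq_factorial_mul_choose]; ring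
    _ = ℓ ! * (ℓ + 1).ascFactorial (j - k) * (ℓ + j).descFactorial k * (k ! * j.choose k) := by
        rw [add_choose_mul_factorial_mul_factorial, hfac]
    _ = _ := by ring

lemma factorial_mul_choose_mul_hypergeometric_sum (x y : ℝ) (ℓ j : ℕ) :
    (j ! : ℝ) * ((ℓ + j).choose j : ℝ) *
        ∑ k ∈ range (j + 1), realPoch (-(j : ℝ)) k * realPoch (-x) k /
          (realPoch (-(ℓ : ℝ) - (j : ℝ)) k * (k ! : ℝ)) * (-1 : ℝ) ^ k * y ^ (j - k)
      = ∑ k ∈ range (j + 1), (j.choose k * (ℓ + 1).ascFactorial (j - k) : ℕ) *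
          (descPochhammer ℝ k).eval x * y ^ (j - k) := by
  rw [mul_sum]
  refine sum_congr rfl fun k hk => ?_
  have hkj : k ≤ j := Nat.lt_succ_iff.mp (mem_range.mp hk)
  have hD : ((ℓ + j).descFactorial k : ℝ) ≠ 0 := by
    exact_mod_cast (Nat.descFactorial_eq_zero_iff_lt.not.mpr (by omega))
  have hcast : ((j ! * (ℓ + j).choose j * j.descFactorial k : ℕ) : ℝ)
      = ((j.choose k * (ℓ + 1).ascFactorial (j - k) * (ℓ + j).descFactorial k * k ! : ℕ) : ℝ) :=
    congrArg _ (Nat.factorial_mul_add_choose_mul_descFactorial hkj)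
  rw [show -(ℓ : ℝ) - j = -((ℓ + j : ℕ) : ℝ) by push_cast; ring, realPoch_neg_natCast,
    realPoch_neg_natCast, realPoch_neg]
  push_cast at hcast ⊢
  field_simp
  rw [← pow_mul, mul_comm k, pow_mul, neg_one_sq, one_pow]
  linear_combination (eval x (descPochhammer ℝ k) * y ^ (j - k)) * hcast

lemma sum_genus1a_descPochhammer_eq_genus1Q (ν : ℝ) (j : ℕ) (hj : j = 1 ∨ j = 2 ∨ j = 3) :
    ∑ ℓ ∈ range 3, genus1a ℓ ν * ∑ k ∈ range (j + 1),
      (j.choose k * (ℓ + 1).ascFactorial (j - k) : ℕ) *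
          (descPochhammer ℝ k).eval (ν * j) * (ν - 1) ^ (j - k) = genus1Q j ν := by
  rcases hj with rfl | rfl | rfl <;>
  · simp only [sum_range_succ, sum_range_zero, descPochhammer_succ_eval, descPochhammer_zero,
      eval_one, genus1a, genus1Q]
    norm_num [Nat.ascFactorial, Nat.choose]
    ring

/-- For every real `ν` and each `j ∈ {1,2,3}`:
`j!·Σ_{ℓ=0}^{2} a_ℓ(ν)·C(ℓ+j,j)·Σ_{k=0}^{j} [(−j)_k(−νj)_k/((−ℓ−j)_k·k!)]·(−1)^k·(ν−1)^{j−k}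
 = Q_{1,j}(ν)`, pinning down the genus-1 coefficients of the hypergeometric representation
of the two-legged counts `𝒩₁(2ν,j)`. -/
theorem genus1_hypergeometric_identity :
    ∀ (ν : ℝ) (j : ℕ), j = 1 ∨ j = 2 ∨ j = 3 →
      (Nat.factorial j : ℝ) *
        ∑ ℓ ∈ Finset.range 3, genus1a ℓ ν * ((ℓ + j).choose j : ℝ) *
          ∑ k ∈ Finset.range (j + 1),
            realPoch (-(j : ℝ)) k * realPoch (-(ν * j)) k /
                (realPoch (-(ℓ : ℝ) - (j : ℝ)) k * (Nat.factorial k : ℝ)) *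
              (-1 : ℝ) ^ k * (ν - 1) ^ (j - k)
      = genus1Q j ν := by
  intro ν j hj
  calc _ = ∑ ℓ ∈ range 3, genus1a ℓ ν * ∑ k ∈ range (j + 1),
          (j.choose k * (ℓ + 1).ascFactorial (j - k) : ℕ) *
            (descPochhammer ℝ k).eval (ν * j) * (ν - 1) ^ (j - k) := by
        rw [mul_sum]
        refine sum_congr rfl fun ℓ _ => ?_
        rw [← factorial_mul_choose_mul_hypergeometric_sum]
        ring
    _ = genus1Q j ν := sum_genus1a_descPochhammer_eq_genus1Q ν j hj
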